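/- Let X_1, X_2, … be i.i.d. with E X_1 = a ≠ 0 and Var X_1 = σ² < ∞, and N(λ) Poisson(λ) independent of the X_j. Then ζ_2( (1/(aλ)) Σ_{j=1}^{N(λ)} X_j , 1 ) ≤ (1/(2λ)) (1 + σ²/a²). -/

import Mathlib

open MeasureTheory ProbabilityTheory Real Set Finset

noncomputable section

/-- The Zolotarev function class `F_s` for `s = m + α`: bounded, `m` times
continuously differentiable functions whose `m`-th derivative is `α`-Hölder
with constant 1. -/
def zClass (m : ℕ) (α : ℝ) : Set (ℝ → ℝ) :=
  {f | (∃ C, ∀ x, |f x| ≤ C) ∧ ContDiff ℝ m f ∧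
    ∀ x y, |iteratedDeriv m f x - iteratedDeriv m f y| ≤ |x - y| ^ α}

/-- Zolotarev ζ-distance between two laws on ℝ, for `s = m + α`. -/
def zetaM (m : ℕ) (α : ℝ) (P Q : Measure ℝ) : ℝ :=
  sSup { d | ∃ f ∈ zClass m α, d = |(∫ x, f x ∂P) - ∫ x, f x ∂Q| }

/-- Zolotarev ζ-distance between two random variables. -/
def zeta {Ω₁ Ω₂ : Type*} [MeasurableSpace Ω₁] [MeasurableSpace Ω₂]
    (m : ℕ) (α : ℝ) (P₁ : Measure Ω₁) (P₂ : Measure Ω₂)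
    (X : Ω₁ → ℝ) (Y : Ω₂ → ℝ) : ℝ :=
  zetaM m α (P₁.map X) (P₂.map Y)

end

/-!
Write `Y = ∑_{j < N} X_j` and `S = Y / (aλ)`. A function `f` in the Zolotarev class of order 2
has a 1-Lipschitz derivative, so `|f s - f m - f' m (s - m)| ≤ (s - m)² / 2`; taking expectations
at `m = E S` kills the linear term and gives `ζ₂(S, E S) ≤ Var S / 2`.

Because `N` is independent of the sequence `X`, the law of `(N, X)` is a product, so every moment
of `Y` is the Poisson average over `n` of the corresponding moment of `X_0 + ⋯ + X_{n-1}`: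
`E Y = a E N = aλ` and `E Y² = E[N σ² + N² a²] = λσ² + a²(λ² + λ)`. Hence `Var Y = λ(σ² + a²)`,
`E S = 1` and `Var S = (1 + σ²/a²)/λ`.
-/

open scoped NNReal Nat

section Taylor

variable {f f' : ℝ → ℝ}

lemma abs_sub_sub_mul_le_sq_div_two_of_le (hf : ∀ t, HasDerivAt f (f' t) t)
    (hf' : ∀ s t, |f' s - f' t| ≤ |s - t|) {c x : ℝ} (hcx : c ≤ x) :
    |f x - f c - f' c * (x - c)| ≤ (x - c) ^ 2 / 2 := by
  have hφ : ∀ t, HasDerivAt (fun t => f t - f c - f' c * (t - c)) (f' t - f' c) t := fun t => by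
    simpa using ((hf t).sub_const (f c)).fun_sub
      (((hasDerivAt_id' t).sub_const c).const_mul (f' c))
  have hB : ∀ t, HasDerivAt (fun t => (t - c) ^ 2 / 2) (t - c) t := fun t =>
    ((((hasDerivAt_id' t).sub_const c).fun_pow 2).div_const 2).congr_deriv (by ring)
  refine image_norm_le_of_norm_deriv_right_le_deriv_boundary
    (fun t _ => (hφ t).continuousAt.continuousWithinAt) (fun t _ => (hφ t).hasDerivWithinAt)
    (by simp) hB (fun t ht => ?_) ⟨hcx, le_rfl⟩
  simpa [abs_of_nonneg (sub_nonneg.2 ht.1)] using hf' t c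

lemma abs_sub_sub_mul_le_sq_div_two (hf : ∀ t, HasDerivAt f (f' t) t)
    (hf' : ∀ s t, |f' s - f' t| ≤ |s - t|) (c x : ℝ) :
    |f x - f c - f' c * (x - c)| ≤ (x - c) ^ 2 / 2 := by
  rcases le_total c x with hcx | hxc
  · exact abs_sub_sub_mul_le_sq_div_two_of_le hf hf' hcx
  · have hg : ∀ t, HasDerivAt (fun t => f (-t)) (-f' (-t)) t := fun t =>
      ((hf (-t)).comp t (hasDerivAt_neg t)).congr_deriv (by ring)
    have hg' : ∀ s t, |-f' (-s) - -f' (-t)| ≤ |s - t| := fun s t => by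
      rw [← abs_neg, ← abs_neg (s - t)]
      convert hf' (-s) (-t) using 2 <;> ring
    have := abs_sub_sub_mul_le_sq_div_two_of_le hg hg' (neg_le_neg hxc)
    convert this using 2 <;> simp <;> ring

end Taylor

section Zolotarev

variable {Ω : Type*} [MeasurableSpace Ω] {P : Measure Ω} [IsProbabilityMeasure P]

lemma hasDerivAt_deriv_of_mem_zClass_one {f : ℝ → ℝ} (hf : f ∈ zClass 1 1) (t : ℝ) :
    HasDerivAt f (deriv f t) t :=
  (hf.2.1.differentiable one_ne_zero t).hasDerivAt

lemma abs_deriv_sub_le_of_mem_zClass_one {f : ℝ → ℝ} (hf : f ∈ zClass 1 1) (s t : ℝ) :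
    |deriv f s - deriv f t| ≤ |s - t| := by
  simpa using hf.2.2 s t

lemma abs_integral_comp_sub_le_variance_div_two {S : Ω → ℝ} (hS : MemLp S 2 P) {f : ℝ → ℝ}
    (hf : f ∈ zClass 1 1) :
    |∫ ω, f (S ω) ∂P - f (P[S])| ≤ Var[S; P] / 2 := by
  set m := P[S]
  obtain ⟨C, hC⟩ := hf.1
  have hfS : Integrable (fun ω => f (S ω)) P :=
    .of_bound (hf.2.1.continuous.comp_aestronglyMeasurable hS.1) C
      (ae_of_all _ fun ω => hC (S ω))
  have hfSm : Integrable (fun ω => f (S ω) - f m) P := hfS.sub (integrable_const _)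
  have hSm : Integrable (fun ω => S ω - m) P := (hS.integrable one_le_two).sub (integrable_const m)
  have hlin : Integrable (fun ω => deriv f m * (S ω - m)) P := hSm.const_mul _
  have hsq : Integrable (fun ω => (S ω - m) ^ 2 / 2) P :=
    (hS.sub (memLp_const m)).integrable_sq.div_const 2
  have hmean : ∫ ω, (f (S ω) - f m - deriv f m * (S ω - m)) ∂P = ∫ ω, f (S ω) ∂P - f m := by
    rw [integral_sub hfSm hlin, integral_sub hfS (integrable_const _), integral_const_mul,
      integral_sub (hS.integrable one_le_two) (integrable_const m)]
    simp [m]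
  rw [← hmean, variance_eq_integral hS.1.aemeasurable, ← integral_div]
  refine abs_integral_le_integral_abs.trans (integral_mono (hfSm.sub hlin).abs hsq fun ω => ?_)
  exact abs_sub_sub_mul_le_sq_div_two (hasDerivAt_deriv_of_mem_zClass_one hf)
    (abs_deriv_sub_le_of_mem_zClass_one hf) m (S ω)

theorem zeta_one_one_const_le_variance_div_two {Ω' : Type*} [MeasurableSpace Ω']
    (Q : Measure Ω') [IsProbabilityMeasure Q] {S : Ω → ℝ} (hS : MemLp S 2 P) :
    zeta 1 1 P Q S (fun _ => P[S]) ≤ Var[S; P] / 2 := by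
  refine Real.sSup_le ?_ (div_nonneg (variance_nonneg _ _) two_pos.le)
  rintro _ ⟨f, hf, rfl⟩
  rw [Measure.map_const, measure_univ, one_smul, integral_dirac,
    integral_map hS.1.aemeasurable hf.2.1.continuous.aestronglyMeasurable]
  exact abs_integral_comp_sub_le_variance_div_two hS hf

end Zolotarev

section Poisson

variable (r : ℝ≥0)

lemma poisson_weight_succ_mul (n : ℕ) :
    Real.exp (-r) * r ^ (n + 1) / ((n + 1)! : ℝ) * (n + 1) =
      r * (Real.exp (-r) * r ^ n / (n ! : ℝ)) := by
  rw [Nat.factorial_succ, Nat.cast_mul, Nat.cast_succ, pow_succ]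
  field_simp

variable {r} in
/-- Stein's identity for the Poisson law: `E[N g(N)] = r E[g(N + 1)]`. -/
lemma HasSum.poisson_weight_mul_cast_mul {g : ℕ → ℝ} {s : ℝ}
    (h : HasSum (fun n => Real.exp (-r) * r ^ n / (n ! : ℝ) * g (n + 1)) s) :
    HasSum (fun n => Real.exp (-r) * r ^ n / (n ! : ℝ) * (n * g n)) (r * s) := by
  have hshift :
      (fun n => Real.exp (-r) * r ^ (n + 1) / ((n + 1)! : ℝ) * ((n + 1 : ℕ) * g (n + 1))) =
        fun n => r * (Real.exp (-r) * r ^ n / (n ! : ℝ) * g (n + 1)) := by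
    funext n
    rw [Nat.cast_succ, ← mul_assoc, poisson_weight_succ_mul, mul_assoc]
  refine (hasSum_nat_add_iff' 1).1 ?_
  simp only [Finset.sum_range_one, Nat.cast_zero, zero_mul, mul_zero, sub_zero]
  rw [hshift]
  exact h.mul_left (r : ℝ)

lemma hasSum_poisson_weight_mul_cast :
    HasSum (fun n => Real.exp (-r) * r ^ n / (n ! : ℝ) * n) r := by
  have h := HasSum.poisson_weight_mul_cast_mul (g := fun _ => 1)
    (by simpa using hasSum_one_poissonMeasure r)
  simpa using h

lemma hasSum_poisson_weight_mul_cast_sq :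
    HasSum (fun n => Real.exp (-r) * r ^ n / (n ! : ℝ) * (n : ℝ) ^ 2) (r ^ 2 + r) := by
  have h := (hasSum_poisson_weight_mul_cast r).add (hasSum_one_poissonMeasure r)
  convert HasSum.poisson_weight_mul_cast_mul (g := fun n => n) (by simpa [mul_add] using h)
    using 1
  · simp [sq]
  · ring

lemma integrable_cast_poissonMeasure : Integrable (fun n : ℕ => (n : ℝ)) Po(r) :=
  integrable_poissonMeasure_iff.2 <| by simpa using (hasSum_poisson_weight_mul_cast r).summable

lemma integrable_cast_sq_poissonMeasure : Integrable (fun n : ℕ => (n : ℝ) ^ 2) Po(r) :=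
  integrable_poissonMeasure_iff.2 <| by simpa using (hasSum_poisson_weight_mul_cast_sq r).summable

lemma integral_cast_poissonMeasure : ∫ n, (n : ℝ) ∂Po(r) = r := by
  simpa [integral_poissonMeasure] using (hasSum_poisson_weight_mul_cast r).tsum_eq

lemma integral_cast_sq_poissonMeasure : ∫ n, (n : ℝ) ^ 2 ∂Po(r) = r ^ 2 + r := by
  simpa [integral_poissonMeasure] using (hasSum_poisson_weight_mul_cast_sq r).tsum_eq

end Poisson

section IndepIndex

variable {Ω ι β : Type*} [MeasurableSpace Ω] [MeasurableSpace ι] [MeasurableSpace β]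
  [Countable ι] [MeasurableSingletonClass ι] {P : Measure Ω} [IsFiniteMeasure P]
  {N : Ω → ι} {Z : Ω → β} {g : ι → β → ℝ}

lemma ProbabilityTheory.IndepFun.integrable_comp_of_integrable_integral_norm
    (hN : Measurable N) (hZ : Measurable Z) (hNZ : IndepFun N Z P) (hg : ∀ n, Measurable (g n))
    (hgZ : ∀ n, Integrable (fun ω => g n (Z ω)) P)
    (hnorm : Integrable (fun n => ∫ ω, ‖g n (Z ω)‖ ∂P) (P.map N)) :
    Integrable (fun ω => g (N ω) (Z ω)) P := by
  have hg' : Measurable (Function.uncurry g) := measurable_from_prod_countable_right hg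
  refine (integrable_map_measure hg'.aestronglyMeasurable (hN.prodMk hZ).aemeasurable).1 ?_
  rw [hNZ.map_prod_eq_prod_map_map hN.aemeasurable hZ.aemeasurable,
    integrable_prod_iff hg'.aestronglyMeasurable]
  refine ⟨ae_of_all _ fun n => ?_, ?_⟩
  · exact (integrable_map_measure (hg n).aestronglyMeasurable hZ.aemeasurable).2 (hgZ n)
  · refine hnorm.congr (ae_of_all _ fun n => ?_)
    exact (integral_map hZ.aemeasurable (hg n).norm.aestronglyMeasurable).symm

lemma ProbabilityTheory.IndepFun.integral_comp_eq_integral_integral (hN : Measurable N)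
    (hZ : Measurable Z) (hNZ : IndepFun N Z P) (hg : ∀ n, Measurable (g n))
    (hint : Integrable (fun ω => g (N ω) (Z ω)) P) :
    ∫ ω, g (N ω) (Z ω) ∂P = ∫ n, ∫ ω, g n (Z ω) ∂P ∂(P.map N) := by
  have hg' : Measurable (Function.uncurry g) := measurable_from_prod_countable_right hg
  have hprod := hNZ.map_prod_eq_prod_map_map hN.aemeasurable hZ.aemeasurable
  have hint' : Integrable (Function.uncurry g) ((P.map N).prod (P.map Z)) := by
    rwa [← hprod, integrable_map_measure hg'.aestronglyMeasurable (hN.prodMk hZ).aemeasurable]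
  calc ∫ ω, g (N ω) (Z ω) ∂P = ∫ p, Function.uncurry g p ∂(P.map fun ω => (N ω, Z ω)) :=
        (integral_map (hN.prodMk hZ).aemeasurable hg'.aestronglyMeasurable).symm
    _ = ∫ n, ∫ z, g n z ∂(P.map Z) ∂(P.map N) := by
        rw [hprod, integral_prod _ hint']
        rfl
    _ = ∫ n, ∫ ω, g n (Z ω) ∂P ∂(P.map N) := by
        congr 1 with n
        exact integral_map hZ.aemeasurable (hg n).aestronglyMeasurable

end IndepIndex

section RandomSum

variable {Ω : Type*} [MeasurableSpace Ω] {P : Measure Ω} {X : ℕ → Ω → ℝ} {N : Ω → ℕ}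
  {a σ : ℝ} {r : ℝ≥0}

lemma integral_sum_range (hX : ∀ j, Integrable (X j) P) (hmean : ∀ j, P[X j] = a) (n : ℕ) :
    ∫ ω, ∑ j ∈ range n, X j ω ∂P = n * a := by
  simp [integral_finsetSum _ fun j _ => hX j, hmean]

lemma integral_sum_range_sq [IsProbabilityMeasure P] (hX : ∀ j, MemLp (X j) 2 P)
    (hindep : iIndepFun X P) (hmean : ∀ j, P[X j] = a) (hvar : ∀ j, Var[X j; P] = σ ^ 2)
    (n : ℕ) : ∫ ω, (∑ j ∈ range n, X j ω) ^ 2 ∂P = n * σ ^ 2 + (n * a) ^ 2 := by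
  have hvarW : Var[∑ j ∈ range n, X j; P] = n * σ ^ 2 := by
    rw [IndepFun.variance_sum (fun j _ => hX j) fun i _ j _ hij => hindep.indepFun hij]
    simp [hvar]
  have h := variance_eq_sub (memLp_finsetSum' (range n) fun j _ => hX j)
  simp only [hvarW, Pi.pow_apply, Finset.sum_apply,
    integral_sum_range (fun j => (hX j).integrable one_le_two) hmean] at h
  linarith

lemma measurable_sum_range_apply (n : ℕ) : Measurable fun x : ℕ → ℝ => ∑ j ∈ range n, x j :=
  Finset.measurable_sum (range n) fun j _ => measurable_pi_apply j

def randomSum (X : ℕ → Ω → ℝ) (N : Ω → ℕ) (ω : Ω) : ℝ :=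
  ∑ j ∈ range (N ω), X j ω

lemma measurable_randomSum (hX : ∀ j, Measurable (X j)) (hN : Measurable N) :
    Measurable (randomSum X N) :=
  (measurable_from_prod_countable_right (f := fun p : ℕ × (ℕ → ℝ) => ∑ j ∈ range p.1, p.2 j)
    measurable_sum_range_apply).comp (hN.prodMk (measurable_pi_lambda _ hX))

lemma memLp_two_randomSum [IsProbabilityMeasure P] (hXm : ∀ j, Measurable (X j))
    (hX : ∀ j, MemLp (X j) 2 P) (hindep : iIndepFun X P) (hmean : ∀ j, P[X j] = a)
    (hvar : ∀ j, Var[X j; P] = σ ^ 2) (hN : Measurable N) (hNlaw : P.map N = Po(r))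
    (hNX : IndepFun N (fun ω j => X j ω) P) :
    MemLp (randomSum X N) 2 P := by
  refine (memLp_two_iff_integrable_sq (measurable_randomSum hXm hN).aestronglyMeasurable).2 ?_
  refine hNX.integrable_comp_of_integrable_integral_norm
    (g := fun n x => (∑ j ∈ range n, x j) ^ 2) hN (measurable_pi_lambda _ hXm)
    (fun n => (measurable_sum_range_apply n).pow_const 2)
    (fun n => (memLp_finsetSum (range n) fun j _ => hX j).integrable_sq) ?_
  rw [hNlaw]
  refine (((integrable_cast_poissonMeasure r).mul_const (σ ^ 2)).add
    ((integrable_cast_sq_poissonMeasure r).mul_const (a ^ 2))).congr (ae_of_all _ fun n => ?_)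
  simp only [Real.norm_eq_abs, abs_sq, integral_sum_range_sq hX hindep hmean hvar, Pi.add_apply]
  ring

lemma integral_randomSum [IsProbabilityMeasure P] (hXm : ∀ j, Measurable (X j))
    (hX : ∀ j, MemLp (X j) 2 P) (hindep : iIndepFun X P) (hmean : ∀ j, P[X j] = a)
    (hvar : ∀ j, Var[X j; P] = σ ^ 2) (hN : Measurable N) (hNlaw : P.map N = Po(r))
    (hNX : IndepFun N (fun ω j => X j ω) P) :
    P[randomSum X N] = a * r := by
  refine (hNX.integral_comp_eq_integral_integral (g := fun n (x : ℕ → ℝ) => ∑ j ∈ range n, x j)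
    hN (measurable_pi_lambda _ hXm) measurable_sum_range_apply
    ((memLp_two_randomSum hXm hX hindep hmean hvar hN hNlaw hNX).integrable one_le_two)).trans ?_
  simp only [integral_sum_range (fun j => (hX j).integrable one_le_two) hmean, hNlaw,
    integral_mul_const, integral_cast_poissonMeasure]
  ring

lemma variance_randomSum [IsProbabilityMeasure P] (hXm : ∀ j, Measurable (X j))
    (hX : ∀ j, MemLp (X j) 2 P) (hindep : iIndepFun X P) (hmean : ∀ j, P[X j] = a)
    (hvar : ∀ j, Var[X j; P] = σ ^ 2) (hN : Measurable N) (hNlaw : P.map N = Po(r))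
    (hNX : IndepFun N (fun ω j => X j ω) P) :
    Var[randomSum X N; P] = r * (σ ^ 2 + a ^ 2) := by
  have hY := memLp_two_randomSum hXm hX hindep hmean hvar hN hNlaw hNX
  have hsq : ∫ ω, randomSum X N ω ^ 2 ∂P = r * σ ^ 2 + a ^ 2 * (r ^ 2 + r) := by
    refine (hNX.integral_comp_eq_integral_integral
      (g := fun n (x : ℕ → ℝ) => (∑ j ∈ range n, x j) ^ 2) hN (measurable_pi_lambda _ hXm)
      (fun n => (measurable_sum_range_apply n).pow_const 2) hY.integrable_sq).trans ?_
    simp only [integral_sum_range_sq hX hindep hmean hvar, hNlaw, mul_pow]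
    rw [integral_add ((integrable_cast_poissonMeasure r).mul_const _)
      ((integrable_cast_sq_poissonMeasure r).mul_const _), integral_mul_const, integral_mul_const,
      integral_cast_poissonMeasure, integral_cast_sq_poissonMeasure]
    ring
  rw [variance_eq_sub hY]
  simp only [Pi.pow_apply, hsq, integral_randomSum hXm hX hindep hmean hvar hN hNlaw hNX]
  ring

end RandomSum

theorem stmt7 {Ω : Type*} [MeasurableSpace Ω] (P : Measure Ω) [IsProbabilityMeasure P]
    (X : ℕ → Ω → ℝ) (N : Ω → ℕ) (a σ lam : ℝ) (hlam : 0 < lam)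
    (hXmeas : ∀ j, Measurable (X j))
    (hindep : iIndepFun X P)
    (hident : ∀ j, P.map (X j) = P.map (X 0))
    (hL2 : MemLp (X 0) 2 P)
    (hmean : ∫ ω, X 0 ω ∂P = a) (ha : a ≠ 0) (hvar : variance (X 0) P = σ ^ 2)
    (hNmeas : Measurable N)
    (hNdist : ∀ k : ℕ, (P {ω | N ω = k}).toReal = Real.exp (-lam) * lam ^ k / k.factorial)
    (hNindep : IndepFun N (fun ω j => X j ω) P) :
    zeta 1 1 P P (fun ω => (1 / (a * lam)) * ∑ j ∈ Finset.range (N ω), X j ω)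
        (fun _ => (1 : ℝ)) ≤
      (1 / (2 * lam)) * (1 + σ ^ 2 / a ^ 2) := by
  set r : ℝ≥0 := ⟨lam, hlam.le⟩
  have hr : (r : ℝ) = lam := rfl
  have hNlaw : P.map N = Po(r) := Measure.ext_of_singleton fun n => by
    rw [Measure.map_apply hNmeas (measurableSet_singleton n), poissonMeasure_singleton,
      ← ENNReal.ofReal_toReal (measure_ne_top P _)]
    exact congrArg ENNReal.ofReal (hNdist n)
  have hXid (j : ℕ) : IdentDistrib (X j) (X 0) P P :=
    ⟨(hXmeas j).aemeasurable, (hXmeas 0).aemeasurable, hident j⟩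
  have hX2 (j : ℕ) : MemLp (X j) 2 P := (hXid j).memLp_iff.2 hL2
  have hXmean (j : ℕ) : P[X j] = a := (hXid j).integral_eq.trans hmean
  have hXvar (j : ℕ) : Var[X j; P] = σ ^ 2 := (hXid j).variance_eq.trans hvar
  have hS : MemLp (fun ω => (1 / (a * lam)) * randomSum X N ω) 2 P :=
    (memLp_two_randomSum hXmeas hX2 hindep hXmean hXvar hNmeas hNlaw hNindep).const_mul _
  have hSmean : ∫ ω, (1 / (a * lam)) * randomSum X N ω ∂P = 1 := by
    rw [integral_const_mul,
      integral_randomSum hXmeas hX2 hindep hXmean hXvar hNmeas hNlaw hNindep, hr]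
    field_simp
  change zeta 1 1 P P (fun ω => (1 / (a * lam)) * randomSum X N ω) (fun _ => 1) ≤ _
  calc _ = zeta 1 1 P P _ fun _ => ∫ ω, (1 / (a * lam)) * randomSum X N ω ∂P := by
        rw [hSmean]
    _ ≤ _ := zeta_one_one_const_le_variance_div_two P hS
    _ = _ := by
        rw [variance_const_mul,
          variance_randomSum hXmeas hX2 hindep hXmean hXvar hNmeas hNlaw hNindep, hr]
        field_simp
        ring
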